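/- Let α be irrational, Π_Y((m,n)) = n - αm the projection of ℤ² along the line of slope α, and let Ω = [t, t+ℓ) with ℓ > 0 be a half-open window. Consider the set S = {z ∈ ℤ² : Π_Y(z) ∈ Ω} of lattice points in the strip. Projecting S along the second line W (transversal to V and the axes) to V yields a point set whose consecutive gaps take at most three distinct values, and if there are three values one of them equals the sum of the other two. -/

import Mathlib

/-- Projection to the vertical axis `Y` along the line `V = {(x, αx)}`. -/
noncomputable def projY (α : ℝ) (p : Fin 2 → ℝ) : ℝ := p 1 - α * p 0

/-- Coordinate on the line `V = {(x, αx)}` of the projection along the line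
`W = {(x, βx)}`. -/
noncomputable def projV (α β : ℝ) (p : Fin 2 → ℝ) : ℝ := (p 1 - β * p 0) / (α - β)

/-!
The right neighbour of `z` is `z + c` for the step `c` of least positive `V`-coordinate among
those keeping `Π_Y (z + c)` in the window `[t, t + L)`. Such a step has `Π_Y c ∈ (-L, 0)` (a lower
step) or `Π_Y c ∈ [0, L)` (an upper step). Let `a` and `b` be the shortest lower and upper steps,
ties broken towards `Π_Y = 0`. If an upper step `c` has `Π_Y c < Π_Y b`, then `c - b` is a lower
step, so `c` is at least as long as `a + b`; symmetrically for lower steps. Hence the gap at `z` is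
the length of `a` or of `b` when one of them is admissible (the shorter one if both are), and
otherwise that of `a + b`, which is then admissible. Irrationality of `α` makes both kinds of steps exist, and discreteness
of `ℤ²` makes the shortest ones exist.
-/

open Set

theorem exists_isMinOn_toLex_of_finite_sublevel {X β γ : Type*} [LinearOrder β] [LinearOrder γ]
    {s : Set X} (f : X → β) (g : X → γ) (hs : s.Nonempty)
    (hfin : ∀ K, {x ∈ s | f x ≤ K}.Finite) :
    ∃ a ∈ s, IsMinOn (fun x => toLex (f x, g x)) s a := by
  obtain ⟨x₀, hx₀⟩ := hs
  obtain ⟨a, ⟨has, hax₀⟩, ha⟩ :=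
    Set.exists_min_image _ (fun x => toLex (f x, g x)) (hfin (f x₀)) ⟨x₀, hx₀, le_rfl⟩
  refine ⟨a, has, isMinOn_iff.2 fun x hx => ?_⟩
  rcases le_or_gt (f x) (f x₀) with hx' | hx'
  · exact ha x ⟨hx, hx'⟩
  · exact Prod.Lex.toLex_le_toLex.2 (Or.inl (hax₀.trans_lt hx'))

section IsMinOnToLex

variable {X β γ : Type*} [LinearOrder β] [LinearOrder γ] {f : X → β} {g : X → γ}
  {s : Set X} {a x : X}

theorem IsMinOn.fst_le_of_toLex (h : IsMinOn (fun x => toLex (f x, g x)) s a) (hx : x ∈ s) :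
    f a ≤ f x :=
  (Prod.Lex.toLex_le_toLex'.1 (isMinOn_iff.1 h x hx)).1

theorem IsMinOn.fst_lt_of_toLex (h : IsMinOn (fun x => toLex (f x, g x)) s a) (hx : x ∈ s)
    (hg : g x < g a) : f a < f x := by
  obtain ⟨hle, heq⟩ := Prod.Lex.toLex_le_toLex'.1 (isMinOn_iff.1 h x hx)
  exact hle.lt_of_ne fun h' => (heq h').not_gt hg

end IsMinOnToLex

section ThreeGaps

variable {Λ : Type*} [AddGroup Λ] {py pv : Λ →+ ℝ} {L : ℝ} {a b : Λ}

variable (py pv L) in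
def lowerSteps : Set Λ := {c | py c ∈ Ioo (-L) 0 ∧ 0 < pv c}

variable (py pv L) in
def upperSteps : Set Λ := {c | py c ∈ Ico 0 L ∧ 0 < pv c}

theorem lowerSteps_subset :
    lowerSteps py pv L ⊆ {c | |py c| ≤ L ∧ 0 < pv c} := fun _ hc =>
  ⟨abs_le.2 ⟨hc.1.1.le, by linarith [hc.1.1, hc.1.2]⟩, hc.2⟩

theorem upperSteps_subset :
    upperSteps py pv L ⊆ {c | |py c| ≤ L ∧ 0 < pv c} := fun _ hc =>
  ⟨abs_le.2 ⟨by linarith [hc.1.1, hc.1.2], hc.1.2.le⟩, hc.2⟩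

theorem add_le_of_mem_upperSteps
    (ha_min : IsMinOn (fun c => toLex (pv c, -py c)) (lowerSteps py pv L) a)
    (hb : b ∈ upperSteps py pv L)
    (hb_min : IsMinOn (fun c => toLex (pv c, py c)) (upperSteps py pv L) b)
    {c : Λ} (hc : c ∈ upperSteps py pv L) (hcb : py c < py b) : pv a + pv b ≤ pv c := by
  have hbc : pv b < pv c := hb_min.fst_lt_of_toLex hc hcb
  have hcb_mem : c - b ∈ lowerSteps py pv L := by
    refine ⟨⟨?_, ?_⟩, ?_⟩ <;> simp only [map_sub] <;> linarith [hc.1.1, hb.1.2]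
  have := ha_min.fst_le_of_toLex hcb_mem
  rw [map_sub] at this
  linarith

theorem add_le_of_mem_lowerSteps
    (ha : a ∈ lowerSteps py pv L)
    (ha_min : IsMinOn (fun c => toLex (pv c, -py c)) (lowerSteps py pv L) a)
    (hb_min : IsMinOn (fun c => toLex (pv c, py c)) (upperSteps py pv L) b)
    {c : Λ} (hc : c ∈ lowerSteps py pv L) (hac : py a < py c) : pv a + pv b ≤ pv c := by
  have hac' : pv a < pv c := ha_min.fst_lt_of_toLex hc (neg_lt_neg hac)
  have hca_mem : c - a ∈ upperSteps py pv L := by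
    refine ⟨⟨?_, ?_⟩, ?_⟩ <;> simp only [map_sub] <;> linarith [hc.1.2, ha.1.1]
  have := hb_min.fst_le_of_toLex hca_mem
  rw [map_sub] at this
  linarith

variable (py pv L) in
def admissibleSteps (t y : ℝ) : Set Λ := {c | y + py c ∈ Ico t (t + L) ∧ 0 < pv c}

theorem gaps_eq_image_admissibleSteps (t : ℝ) (z : Λ) :
    {u : ℝ | 0 < u ∧ ∃ w ∈ py ⁻¹' Ico t (t + L), pv w = pv z + u} =
      pv '' admissibleSteps py pv L t (py z) := by
  ext u
  constructor
  · rintro ⟨hu, w, hw, hwz⟩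
    have hu' : pv (-z + w) = u := by rw [map_add, map_neg, hwz]; abel
    refine ⟨-z + w, ⟨?_, hu'.symm ▸ hu⟩, hu'⟩
    simpa only [map_add, map_neg, add_neg_cancel_left, mem_preimage] using hw
  · rintro ⟨c, ⟨hc, hc0⟩, rfl⟩
    exact ⟨hc0, z + c, by simpa only [mem_preimage, map_add] using hc, map_add _ _ _⟩

theorem mem_lowerSteps_or_mem_upperSteps {t y : ℝ} (hy : y ∈ Ico t (t + L)) {c : Λ}
    (hc : c ∈ admissibleSteps py pv L t y) :
    c ∈ lowerSteps py pv L ∨ c ∈ upperSteps py pv L := by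
  rcases lt_or_ge (py c) 0 with h | h
  · exact .inl ⟨⟨by linarith [hy.2, hc.1.1], h⟩, hc.2⟩
  · exact .inr ⟨⟨h, by linarith [hy.1, hc.1.2]⟩, hc.2⟩

theorem exists_isLeast_image_admissibleSteps
    (ha : a ∈ lowerSteps py pv L)
    (ha_min : IsMinOn (fun c => toLex (pv c, -py c)) (lowerSteps py pv L) a)
    (hb : b ∈ upperSteps py pv L)
    (hb_min : IsMinOn (fun c => toLex (pv c, py c)) (upperSteps py pv L) b)
    {t y : ℝ} (hy : y ∈ Ico t (t + L)) :
    ∃ g ∈ ({pv a, pv b, pv a + pv b} : Set ℝ),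
      IsLeast (pv '' admissibleSteps py pv L t y) g := by
  set W := admissibleSteps py pv L t y
  have least (x : Λ) (hx : x ∈ W) (h : ∀ c ∈ W, pv x ≤ pv c) : IsLeast (pv '' W) (pv x) :=
    ⟨mem_image_of_mem pv hx, forall_mem_image.2 h⟩
  have hsplit (c : Λ) (hc : c ∈ W) := mem_lowerSteps_or_mem_upperSteps hy hc
  by_cases hA : t ≤ y + py a <;> by_cases hB : y + py b < t + L
  · have haW : a ∈ W := ⟨⟨hA, by linarith [ha.1.2, hy.2]⟩, ha.2⟩
    have hbW : b ∈ W := ⟨⟨by linarith [hb.1.1, hy.1], hB⟩, hb.2⟩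
    rcases le_total (pv a) (pv b) with hab | hba
    · refine ⟨pv a, by simp, least a haW fun c hc => ?_⟩
      rcases hsplit c hc with hc' | hc'
      · exact ha_min.fst_le_of_toLex hc'
      · exact hab.trans (hb_min.fst_le_of_toLex hc')
    · refine ⟨pv b, by simp, least b hbW fun c hc => ?_⟩
      rcases hsplit c hc with hc' | hc'
      · exact hba.trans (ha_min.fst_le_of_toLex hc')
      · exact hb_min.fst_le_of_toLex hc'
  · have haW : a ∈ W := ⟨⟨hA, by linarith [ha.1.2, hy.2]⟩, ha.2⟩
    refine ⟨pv a, by simp, least a haW fun c hc => ?_⟩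
    rcases hsplit c hc with hc' | hc'
    · exact ha_min.fst_le_of_toLex hc'
    · linarith [hb.2, add_le_of_mem_upperSteps ha_min hb hb_min hc' (by linarith [hc.1.2])]
  · have hbW : b ∈ W := ⟨⟨by linarith [hb.1.1, hy.1], hB⟩, hb.2⟩
    refine ⟨pv b, by simp, least b hbW fun c hc => ?_⟩
    rcases hsplit c hc with hc' | hc'
    · linarith [ha.2, add_le_of_mem_lowerSteps ha ha_min hb_min hc' (by linarith [hc.1.1])]
    · exact hb_min.fst_le_of_toLex hc'
  · -- neither `a` nor `b` is admissible, but `a + b` is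
    have habW : a + b ∈ W := by
      refine ⟨⟨?_, ?_⟩, ?_⟩ <;> simp only [map_add] <;>
        linarith [ha.1.1, hb.1.2, ha.2, hb.2]
    refine ⟨pv (a + b), by simp, least (a + b) habW fun c hc => ?_⟩
    rw [map_add]
    rcases hsplit c hc with hc' | hc'
    · exact add_le_of_mem_lowerSteps ha ha_min hb_min hc' (by linarith [hc.1.1])
    · exact add_le_of_mem_upperSteps ha_min hb hb_min hc' (by linarith [hc.1.2])

theorem exists_isLeast_gaps
    (ha : a ∈ lowerSteps py pv L)
    (ha_min : IsMinOn (fun c => toLex (pv c, -py c)) (lowerSteps py pv L) a)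
    (hb : b ∈ upperSteps py pv L)
    (hb_min : IsMinOn (fun c => toLex (pv c, py c)) (upperSteps py pv L) b)
    {t : ℝ} {z : Λ} (hz : py z ∈ Ico t (t + L)) :
    ∃ g ∈ ({pv a, pv b, pv a + pv b} : Set ℝ),
      IsLeast {u : ℝ | 0 < u ∧ ∃ w ∈ py ⁻¹' Ico t (t + L), pv w = pv z + u} g := by
  rw [gaps_eq_image_admissibleSteps]
  exact exists_isLeast_image_admissibleSteps ha ha_min hb hb_min hz

end ThreeGaps

theorem Irrational.exists_pos_int_sub_mul_mem_Ioo {α ε : ℝ} (hα : Irrational α)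
    (hε : 0 < ε) :
    ∃ m n : ℤ, 0 < m ∧ (n : ℝ) - α * m ∈ Ioo 0 ε := by
  obtain ⟨N, hN⟩ := exists_nat_one_div_lt hε
  obtain ⟨j, k, hk, -, hjk⟩ := Real.exists_int_int_abs_mul_sub_le α N.succ_pos
  set δ := (j : ℝ) - α * k with hδ_def
  have hδ : Irrational δ := (hα.mul_intCast hk.ne').intCast_sub j
  have hδ_le : |δ| ≤ 1 / ((N : ℝ) + 2) := by
    rw [hδ_def, abs_sub_comm, mul_comm]; convert hjk using 2; push_cast; ring
  have hN₂ : 1 / ((N : ℝ) + 2) < 1 / ((N : ℝ) + 1) := by gcongr; linarith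
  have hN₁ : 1 / ((N : ℝ) + 2) ≤ 1 / 2 := by gcongr; linarith [N.cast_nonneg (α := ℝ)]
  rcases hδ.ne_zero.lt_or_gt with hneg | hpos
  · -- with `η = -δ`, the new witness has `Π_Y = 1 - ⌊1/η⌋ η = η fract (1/η) ∈ (0, η)`
    have hδ1 : -δ < 1 := by linarith [abs_of_neg hneg]
    set q := ⌊(-δ)⁻¹⌋
    have hq : 0 < q := Int.floor_pos.2 (one_le_inv₀ (by linarith) |>.2 hδ1.le)
    have hfract : 0 < Int.fract (-δ)⁻¹ := Int.fract_pos.2 (hδ.neg.inv.ne_int _)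
    have key : ((q * j + 1 : ℤ) : ℝ) - α * (q * k : ℤ) = -δ * Int.fract (-δ)⁻¹ := by
      rw [← Int.self_sub_floor, mul_sub, mul_inv_cancel₀ (neg_ne_zero.2 hneg.ne)]
      push_cast; ring
    refine ⟨q * k, q * j + 1, mul_pos hq hk, ?_, ?_⟩ <;> rw [key]
    · exact mul_pos (neg_pos.2 hneg) hfract
    · have := Int.fract_lt_one (-δ)⁻¹
      have : -δ < ε := by linarith [abs_of_neg hneg]
      nlinarith
  · exact ⟨k, j, hk, hpos, by linarith [abs_of_pos hpos]⟩

theorem Irrational.exists_pos_int_sub_mul_mem_Ioo_neg {α ε : ℝ} (hα : Irrational α)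
    (hε : 0 < ε) :
    ∃ m n : ℤ, 0 < m ∧ (n : ℝ) - α * m ∈ Ioo (-ε) 0 := by
  obtain ⟨m, n, hm, h₁, h₂⟩ := hα.neg.exists_pos_int_sub_mul_mem_Ioo hε
  exact ⟨m, -n, hm, by push_cast; linarith, by push_cast; linarith⟩

section Lattice

variable {α β : ℝ}

variable (α) in
noncomputable def projYHom : (Fin 2 → ℤ) →+ ℝ :=
  AddMonoidHom.mk' (fun z => projY α fun i => (z i : ℝ)) fun z w => by
    simp only [projY, Pi.add_apply, Int.cast_add]; ring

variable (α β) in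
noncomputable def projVHom : (Fin 2 → ℤ) →+ ℝ :=
  AddMonoidHom.mk' (fun z => projV α β fun i => (z i : ℝ)) fun z w => by
    simp only [projV, Pi.add_apply, Int.cast_add]; ring

theorem projYHom_apply (z : Fin 2 → ℤ) : projYHom α z = (z 1 : ℝ) - α * z 0 := rfl

theorem projVHom_eq_projYHom_div_add (hαβ : α ≠ β) (z : Fin 2 → ℤ) :
    projVHom α β z = projYHom α z / (α - β) + z 0 := by
  rw [projYHom_apply, projVHom, AddMonoidHom.mk'_apply, projV]
  field_simp [sub_ne_zero.2 hαβ]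
  ring

theorem finite_setOf_abs_projYHom_le_abs_projVHom_le (hαβ : α ≠ β) (R K : ℝ) :
    {z | |projYHom α z| ≤ R ∧ |projVHom α β z| ≤ K}.Finite := by
  set M₀ := K + R / |α - β|
  refine (isCompact_closedBall (0 : Fin 2 → ℤ) (M₀ + (R + |α| * M₀))).finite_of_discrete.subset ?_
  rintro z ⟨hR, hK⟩
  have h₀ : |(z 0 : ℝ)| ≤ M₀ := by
    have hy : |projYHom α z / (α - β)| ≤ R / |α - β| := by
      rw [abs_div]; gcongr
    calc |(z 0 : ℝ)| = |projVHom α β z - projYHom α z / (α - β)| := by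
          rw [projVHom_eq_projYHom_div_add hαβ]; ring_nf
      _ ≤ |projVHom α β z| + |projYHom α z / (α - β)| := abs_sub _ _
      _ ≤ M₀ := add_le_add hK hy
  have h₁ : |(z 1 : ℝ)| ≤ R + |α| * M₀ := by
    calc |(z 1 : ℝ)| = |projYHom α z + α * z 0| := by rw [projYHom_apply]; ring_nf
      _ ≤ |projYHom α z| + |α| * |(z 0 : ℝ)| := (abs_add_le _ _).trans_eq (by rw [abs_mul])
      _ ≤ R + |α| * M₀ := by gcongr
  have hM₀ : 0 ≤ M₀ := (abs_nonneg _).trans h₀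
  have hR : 0 ≤ R + |α| * M₀ := (abs_nonneg _).trans h₁
  rw [Metric.mem_closedBall, dist_pi_le_iff (by positivity), Fin.forall_fin_two]
  simp only [Int.dist_eq, Pi.zero_apply, Int.cast_zero, sub_zero]
  constructor <;> linarith

theorem projVHom_pos_of_abs_projYHom_lt (hαβ : α ≠ β) {z : Fin 2 → ℤ} (hz₀ : 0 < z 0)
    (hz : |projYHom α z| < |α - β|) : 0 < projVHom α β z := by
  have hy : |projYHom α z / (α - β)| < 1 := by
    rwa [abs_div, div_lt_one (abs_pos.2 (sub_ne_zero.2 hαβ))]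
  have : (1 : ℝ) ≤ z 0 := by exact_mod_cast hz₀
  rw [projVHom_eq_projYHom_div_add hαβ]
  linarith [neg_abs_le (projYHom α z / (α - β))]

theorem upperSteps_nonempty (hα : Irrational α) (hαβ : α ≠ β) {L : ℝ} (hL : 0 < L) :
    (upperSteps (projYHom α) (projVHom α β) L).Nonempty := by
  obtain ⟨m, n, hm, h₁, h₂⟩ :=
    hα.exists_pos_int_sub_mul_mem_Ioo (lt_min hL (abs_pos.2 (sub_ne_zero.2 hαβ)))
  have hmn : projYHom α ![m, n] = n - α * m := by simp [projYHom_apply]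
  rw [← hmn] at h₁ h₂
  refine ⟨![m, n], ⟨h₁.le, h₂.trans_le (min_le_left _ _)⟩,
    projVHom_pos_of_abs_projYHom_lt hαβ hm ?_⟩
  exact abs_lt.2 ⟨by linarith [abs_nonneg (α - β)], h₂.trans_le (min_le_right _ _)⟩

theorem lowerSteps_nonempty (hα : Irrational α) (hαβ : α ≠ β) {L : ℝ} (hL : 0 < L) :
    (lowerSteps (projYHom α) (projVHom α β) L).Nonempty := by
  obtain ⟨m, n, hm, h₁, h₂⟩ :=
    hα.exists_pos_int_sub_mul_mem_Ioo_neg (lt_min hL (abs_pos.2 (sub_ne_zero.2 hαβ)))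
  have hmn : projYHom α ![m, n] = n - α * m := by simp [projYHom_apply]
  rw [← hmn] at h₁ h₂
  refine ⟨![m, n], ⟨(neg_le_neg (min_le_left _ _)).trans_lt h₁, h₂⟩,
    projVHom_pos_of_abs_projYHom_lt hαβ hm ?_⟩
  exact abs_lt.2 ⟨(neg_le_neg (min_le_right _ _)).trans_lt h₁, by linarith [abs_nonneg (α - β)]⟩

theorem exists_isMinOn_toLex_projVHom (hαβ : α ≠ β) {L : ℝ} {s : Set (Fin 2 → ℤ)}
    (hs : s.Nonempty) (hs_sub : s ⊆ {z | |projYHom α z| ≤ L ∧ 0 < projVHom α β z})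
    (g : (Fin 2 → ℤ) → ℝ) : ∃ a ∈ s, IsMinOn (fun z => toLex (projVHom α β z, g z)) s a :=
  exists_isMinOn_toLex_of_finite_sublevel _ g hs fun K =>
    (finite_setOf_abs_projYHom_le_abs_projVHom_le hαβ L K).subset fun _ ⟨hz, hzK⟩ =>
      ⟨(hs_sub hz).1, abs_le.2 ⟨by linarith [(hs_sub hz).2], hzK⟩⟩

end Lattice

theorem three_distance_interval_projection_general
    (α β t L : ℝ) (hα : Irrational α) (hαβ : α ≠ β)
    (hL : 0 < L)
    (S : Set (Fin 2 → ℤ))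
    (hS : S = {z : Fin 2 → ℤ | projY α (fun i => (z i : ℝ)) ∈ Set.Ico t (t + L)}) :
    ∃ d₁ d₂ : ℝ, 0 < d₁ ∧ 0 < d₂ ∧
      ∀ z ∈ S, ∃ g ∈ ({d₁, d₂, d₁ + d₂} : Set ℝ),
        IsLeast {u : ℝ | 0 < u ∧ ∃ w ∈ S,
          projV α β (fun i => (w i : ℝ)) = projV α β (fun i => (z i : ℝ)) + u} g := by
  obtain ⟨a, ha, ha_min⟩ := exists_isMinOn_toLex_projVHom hαβ (lowerSteps_nonempty hα hαβ hL)
    lowerSteps_subset (fun z => -projYHom α z)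
  obtain ⟨b, hb, hb_min⟩ := exists_isMinOn_toLex_projVHom hαβ (upperSteps_nonempty hα hαβ hL)
    upperSteps_subset (projYHom α)
  refine ⟨_, _, ha.2, hb.2, fun z hz => ?_⟩
  subst hS
  exact exists_isLeast_gaps ha ha_min hb hb_min hz

/-- Three-distance property: projecting the lattice points of the strip
`{z ∈ ℤ² : Π_Y z ∈ [t, t+L)}` to `V` along `W` yields a point set whose gaps to the
right nearest neighbour take at most three values `d₁, d₂, d₁+d₂`. -/
theorem three_distance_interval_projection
    (α β t L : ℝ) (hα : Irrational α) (hαβ : α ≠ β) (hα0 : α ≠ 0) (hβ0 : β ≠ 0)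
    (hL : 0 < L)
    (S : Set (Fin 2 → ℤ))
    (hS : S = {z : Fin 2 → ℤ | projY α (fun i => (z i : ℝ)) ∈ Set.Ico t (t + L)}) :
    ∃ d₁ d₂ : ℝ, 0 < d₁ ∧ 0 < d₂ ∧
      ∀ z ∈ S, ∃ g ∈ ({d₁, d₂, d₁ + d₂} : Set ℝ),
        IsLeast {u : ℝ | 0 < u ∧ ∃ w ∈ S,
          projV α β (fun i => (w i : ℝ)) = projV α β (fun i => (z i : ℝ)) + u} g :=
  three_distance_interval_projection_general α β t L hα hαβ hL S hS
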